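/- The generating function M(x,y) = Σ_A x^{#H(A)} y^{#U(A)}, summed over all Motzkin paths A without peaks or valleys (including the empty path), satisfies M = (1 + y(M − 1))(1 + xM) as formal power series. -/

import Mathlib

/-- Steps of bargraphs / Motzkin paths. -/
inductive Step where
  | U : Step
  | H : Step
  | D : Step
deriving DecidableEq

/-- Vertical displacement of a step. -/
def Step.val : Step → ℤ
  | .U => 1
  | .H => 0
  | .D => -1

/-- Mirror of a step (swap U and D). -/
def Step.mirror : Step → Step
  | .U => .D
  | .H => .H
  | .D => .U

/-- Final height of a word. -/
def hgt (w : List Step) : ℤ := (w.map Step.val).sum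

/-- A Motzkin path prefix: never goes below the x-axis. -/
def IsMotzkinPrefix (w : List Step) : Prop := ∀ p : List Step, p <+: w → 0 ≤ hgt p

/-- A Motzkin path: never below the x-axis, ends at height 0. -/
def IsMotzkin (w : List Step) : Prop := IsMotzkinPrefix w ∧ hgt w = 0

/-- No peak `UD` and no valley `DU`. -/
def Cornerless (w : List Step) : Prop :=
  ¬ [Step.U, Step.D] <:+: w ∧ ¬ [Step.D, Step.U] <:+: w

/-- A bargraph: starts at the origin, ends on the x-axis, stays strictly above the
x-axis except at the endpoints, and has no factor `UD` or `DU`. -/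
def IsBargraph (w : List Step) : Prop :=
  2 ≤ w.length ∧ hgt w = 0 ∧
    (∀ p : List Step, p <+: w → p ≠ [] → p ≠ w → 0 < hgt p) ∧ Cornerless w

/-- Semiperimeter: number of `U` steps plus number of `H` steps. -/
def semi (w : List Step) : ℕ := w.count Step.U + w.count Step.H

/-- Length of the initial run of `U` steps. -/
def leadU : List Step → ℕ
  | Step.U :: rest => leadU rest + 1
  | _ => 0

/-- Length of the initial run of `H` steps. -/
def leadH : List Step → ℕ
  | Step.H :: rest => leadH rest + 1
  | _ => 0

/-- Length of the initial run of `D` steps. -/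
def leadD : List Step → ℕ
  | Step.D :: rest => leadD rest + 1
  | _ => 0

/-- Length of the first maximal run of `D` steps (0 if none). -/
def firstDescLen : List Step → ℕ
  | [] => 0
  | Step.D :: rest => leadD rest + 1
  | _ :: rest => firstDescLen rest

/-- Number of occurrences of the two-letter factor `a b`. -/
def cnt2 (a b : Step) : List Step → ℕ
  | x :: y :: rest => (if x = a ∧ y = b then 1 else 0) + cnt2 a b (y :: rest)
  | _ => 0

/-- Heights of the columns (`H` steps), starting from a given height. -/
def colHeights : ℤ → List Step → List ℤ
  | _, [] => []
  | h, Step.U :: rest => colHeights (h + 1) rest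
  | h, Step.H :: rest => h :: colHeights h rest
  | h, Step.D :: rest => colHeights (h - 1) rest

/-- Width of the leftmost maximal horizontal segment (0 if none). -/
def lhsW : List Step → ℕ
  | [] => 0
  | Step.H :: rest => leadH rest + 1
  | _ :: rest => lhsW rest

/-- Delete `h` steps at the start of the leftmost horizontal segment. -/
def stripLeadH (h : ℕ) : List Step → List Step
  | [] => []
  | Step.H :: rest => List.drop h (Step.H :: rest)
  | s :: rest => s :: stripLeadH h rest

/-- Number of initial columns of height 1: largest `j` such that the word begins `U H^j`. -/
def iuc : List Step → ℕ
  | Step.U :: rest => leadH rest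
  | _ => 0

/-- Number of maximal horizontal segments. -/
def hsCount : List Step → ℕ
  | [] => 0
  | [Step.H] => 1
  | [_] => 0
  | a :: b :: rest => (if a = Step.H ∧ b ≠ Step.H then 1 else 0) + hsCount (b :: rest)

/-- Mirror image: reverse the word and swap `U` with `D`. -/
def mir (w : List Step) : List Step := (w.reverse).map Step.mirror

/-- Shape of strictly alternating bargraphs:
`U^{i₁} H D^{k₁} H U^{i₂} H D^{k₂} H ⋯ U^{iₘ} H D^{kₘ}` with all `iᵣ, kᵣ ≥ 1`. -/
inductive SAShape : List Step → Prop where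
  | base (i k : ℕ) : 1 ≤ i → 1 ≤ k →
      SAShape (List.replicate i Step.U ++ [Step.H] ++ List.replicate k Step.D)
  | cons (i k : ℕ) (w : List Step) : 1 ≤ i → 1 ≤ k → SAShape w →
      SAShape (List.replicate i Step.U ++ [Step.H] ++ List.replicate k Step.D ++ [Step.H] ++ w)

/-- A strictly alternating bargraph. -/
def IsStrictAlt (w : List Step) : Prop := IsBargraph w ∧ SAShape w

/-- A secondary structure on `{0, …, m-1}`: all consecutive edges are present, every
vertex has at most one non-consecutive neighbour, and there are no crossing edges. -/
def IsSecondaryStructure {m : ℕ} (G : SimpleGraph (Fin m)) : Prop :=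
  (∀ i j : Fin m, (i : ℕ) + 1 = (j : ℕ) → G.Adj i j) ∧
  (∀ i j k : Fin m, G.Adj i j → G.Adj i k →
      (i : ℕ) + 1 ≠ (j : ℕ) → (j : ℕ) + 1 ≠ (i : ℕ) →
      (i : ℕ) + 1 ≠ (k : ℕ) → (k : ℕ) + 1 ≠ (i : ℕ) → j = k) ∧
  ¬ ∃ i j k l : Fin m, (i : ℕ) < (j : ℕ) ∧ (j : ℕ) < (k : ℕ) ∧ (k : ℕ) < (l : ℕ) ∧
      G.Adj i k ∧ G.Adj j l

/-- Generating function of bargraphs: `x` (variable 0) marks `H` steps,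
`y` (variable 1) marks `U` steps. -/
noncomputable def BG : MvPowerSeries (Fin 2) ℚ :=
  fun d => (Nat.card {w : List Step //
    IsBargraph w ∧ w.count Step.H = d 0 ∧ w.count Step.U = d 1} : ℚ)

/-- Generating function of cornerless Motzkin paths. -/
noncomputable def MG : MvPowerSeries (Fin 2) ℚ :=
  fun d => (Nat.card {w : List Step //
    IsMotzkin w ∧ Cornerless w ∧ w.count Step.H = d 0 ∧ w.count Step.U = d 1} : ℚ)

/-- Generating function of bargraphs avoiding the factor `DH`. -/
noncomputable def BDH : MvPowerSeries (Fin 2) ℚ :=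
  fun d => (Nat.card {w : List Step //
    IsBargraph w ∧ ¬ [Step.D, Step.H] <:+: w ∧
      w.count Step.H = d 0 ∧ w.count Step.U = d 1} : ℚ)

/-- Generating function of bargraphs avoiding the factors `DH` and `HH`. -/
noncomputable def BDHHH : MvPowerSeries (Fin 2) ℚ :=
  fun d => (Nat.card {w : List Step //
    IsBargraph w ∧ ¬ [Step.D, Step.H] <:+: w ∧ ¬ [Step.H, Step.H] <:+: w ∧
      w.count Step.H = d 0 ∧ w.count Step.U = d 1} : ℚ)

/-- Generating function of cornerless Motzkin path prefixes ending at height `h`. -/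
noncomputable def Pgf (h : ℕ) : MvPowerSeries (Fin 2) ℚ :=
  fun d => (Nat.card {w : List Step //
    IsMotzkinPrefix w ∧ Cornerless w ∧ hgt w = (h : ℤ) ∧
      w.count Step.H = d 0 ∧ w.count Step.U = d 1} : ℚ)

/-- Decomposition `G = U^a G₁ H G₂ D^a` of a strictly alternating bargraph. -/
def SADecomp (t : ℕ × List Step × List Step) (G : List Step) : Prop :=
  1 ≤ t.1 ∧ IsStrictAlt t.2.1 ∧ IsStrictAlt (Step.U :: (t.2.2 ++ [Step.D])) ∧
    G = List.replicate t.1 Step.U ++ t.2.1 ++ [Step.H] ++ t.2.2 ++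
      List.replicate t.1 Step.D

/-!
A nonempty Motzkin path without peaks or valleys starts with `H` or `U`. Deleting a leading `H`
leaves an arbitrary such path, so the paths not starting with `U` have generating function
`W = 1 + xM`. A path starting with `U` splits at its first return to the axis as `U A D B`
with `A`, `B` cornerless Motzkin paths; the forbidden factors `UD` and `DU` say exactly that `A`
is nonempty and `B` does not start with `U`, the junctions `U A` and `A D` being harmless because
a Motzkin path neither starts with `D` nor ends with `U`. Hence `M = W + y(M - 1)W`.
-/

section CountingSeries

variable {σ R α β : Type*} [Semiring R]

/-- `Nat.card` is `0` on an infinite fibre, hence the finiteness hypotheses below. -/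
noncomputable def countingSeries (f : α → σ →₀ ℕ) : MvPowerSeries σ R :=
  fun d => (Nat.card {a // f a = d} : R)

theorem coeff_countingSeries (f : α → σ →₀ ℕ) (d : σ →₀ ℕ) :
    MvPowerSeries.coeff d (countingSeries (R := R) f) = Nat.card {a // f a = d} :=
  rfl

theorem countingSeries_congr (e : α ≃ β) {f : α → σ →₀ ℕ} {g : β → σ →₀ ℕ}
    (h : ∀ a, g (e a) = f a) : countingSeries (R := R) g = countingSeries f := by
  ext d
  simp only [coeff_countingSeries]
  exact congrArg _ (Nat.card_congr (e.subtypeEquiv fun a => by rw [h])).symm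

theorem finite_fibre_subtype {f : α → σ →₀ ℕ} (hf : ∀ d, Finite {a // f a = d})
    (p : α → Prop) (d : σ →₀ ℕ) : Finite {a : {a // p a} // f a = d} :=
  Finite.of_injective (fun a => (⟨a.1.1, a.2⟩ : {a // f a = d})) fun a b h => by
    simp only [Subtype.mk.injEq] at h
    exact Subtype.ext (Subtype.ext h)

theorem finite_fibre_const_add {f : α → σ →₀ ℕ} (hf : ∀ d, Finite {a // f a = d})
    (e d : σ →₀ ℕ) : Finite {a // e + f a = d} :=
  Finite.of_injective (fun a => (⟨a.1, eq_tsub_of_add_eq (add_comm e _ ▸ a.2)⟩ :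
    {a // f a = d - e})) fun a b h => by
    simp only [Subtype.mk.injEq] at h
    exact Subtype.ext h

theorem countingSeries_sum_elim {f : α → σ →₀ ℕ} {g : β → σ →₀ ℕ}
    (hf : ∀ d, Finite {a // f a = d}) (hg : ∀ d, Finite {b // g b = d}) :
    countingSeries (R := R) (Sum.elim f g) = countingSeries f + countingSeries g := by
  ext d
  have : Finite {a // Sum.elim f g (.inl a) = d} := hf d
  have : Finite {b // Sum.elim f g (.inr b) = d} := hg d
  rw [map_add, coeff_countingSeries, Nat.card_congr Equiv.subtypeSum, Nat.card_sum, Nat.cast_add]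
  rfl

theorem countingSeries_eq_subtype_add_compl {f : α → σ →₀ ℕ}
    (hf : ∀ d, Finite {a // f a = d}) (p : α → Prop) :
    countingSeries (R := R) f =
      countingSeries (fun a : {a // p a} => f a) + countingSeries (fun a : {a // ¬ p a} => f a) := by
  classical
  rw [← countingSeries_sum_elim (finite_fibre_subtype hf p) (finite_fibre_subtype hf _)]
  exact countingSeries_congr (Equiv.sumCompl p) (by rintro (a | a) <;> rfl)

theorem countingSeries_prod {f : α → σ →₀ ℕ} {g : β → σ →₀ ℕ}
    (hf : ∀ d, Finite {a // f a = d}) (hg : ∀ d, Finite {b // g b = d}) :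
    countingSeries (R := R) (fun p : α × β => f p.1 + g p.2) =
      countingSeries f * countingSeries g := by
  classical
  ext d
  let F (p : {p : α × β // f p.1 + g p.2 = d}) : Finset.HasAntidiagonal.antidiagonal d :=
    ⟨(f p.1.1, g p.1.2), Finset.HasAntidiagonal.mem_antidiagonal.2 p.2⟩
  have hfibre (ij : Finset.HasAntidiagonal.antidiagonal d) :
      {p // F p = ij} ≃ {a // f a = ij.1.1} × {b // g b = ij.1.2} := by
    have hij := Finset.HasAntidiagonal.mem_antidiagonal.1 ij.2
    refine (Equiv.subtypeEquivRight fun p => Subtype.ext_iff).trans <|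
      (Equiv.subtypeSubtypeEquivSubtypeInter _ (fun p => (f p.1, g p.2) = ij.1)).trans <|
      (Equiv.subtypeEquivRight fun p => ?_).trans Equiv.subtypeProdEquivProd
    rw [Prod.ext_iff]
    exact ⟨And.right, fun h => ⟨by rw [h.1, h.2, hij], h⟩⟩
  have : ∀ ij, Finite {p // F p = ij} := fun ij =>
    have := hf ij.1.1; have := hg ij.1.2; Finite.of_equiv _ (hfibre ij).symm
  rw [coeff_countingSeries, MvPowerSeries.coeff_mul,
    Nat.card_congr (Equiv.sigmaFiberEquiv F).symm, Nat.card_sigma, Nat.cast_sum,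
    ← Finset.sum_coe_sort (Finset.HasAntidiagonal.antidiagonal d)]
  refine Fintype.sum_congr _ _ fun ij => ?_
  rw [Nat.card_congr (hfibre ij), Nat.card_prod, Nat.cast_mul]
  rfl

theorem countingSeries_unique [Unique α] (f : α → σ →₀ ℕ) :
    countingSeries (R := R) f = MvPowerSeries.monomial (f default) 1 := by
  classical
  ext d
  rw [coeff_countingSeries, MvPowerSeries.coeff_monomial]
  split_ifs with h
  · rw [(Nat.card_eq_one_iff_unique (α := {a // f a = d})).2
      ⟨inferInstance, ⟨⟨default, h.symm⟩⟩⟩, Nat.cast_one]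
  · have : IsEmpty {a // f a = d} := ⟨fun a => h (by rw [← a.2, Unique.eq_default a.1])⟩
    simp

theorem countingSeries_const_add (e : σ →₀ ℕ) (f : α → σ →₀ ℕ) :
    countingSeries (R := R) (fun a => e + f a) = MvPowerSeries.monomial e 1 * countingSeries f := by
  ext d
  rw [MvPowerSeries.coeff_monomial_mul, coeff_countingSeries, coeff_countingSeries, one_mul]
  split_ifs with h
  · exact congrArg _ (Nat.card_congr (Equiv.subtypeEquivRight fun a =>
      ⟨fun ha => eq_tsub_of_add_eq (add_comm e _ ▸ ha),
        fun ha => by rw [ha, add_tsub_cancel_of_le h]⟩))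
  · have : IsEmpty {a // e + f a = d} := ⟨fun a => h (a.2 ▸ le_self_add)⟩
    simp

end CountingSeries

theorem List.forall_prefix_cons {α : Type*} {P : List α → Prop} {a : α} {l : List α} :
    (∀ p, p <+: a :: l → P p) ↔ P [] ∧ ∀ p, p <+: l → P (a :: p) := by
  simp only [List.prefix_cons_iff]
  grind

theorem List.forall_prefix_append {α : Type*} {P : List α → Prop} {a b : List α} :
    (∀ p, p <+: a ++ b → P p) ↔ (∀ p, p <+: a → P p) ∧ ∀ p, p <+: b → P (a ++ p) := by
  refine ⟨fun h => ⟨fun p hp => h p (hp.trans (List.prefix_append a b)),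
    fun p hp => h _ ((List.prefix_append_right_inj a).2 hp)⟩, fun h p hp => ?_⟩
  obtain ⟨t, ht⟩ := hp
  rcases List.append_eq_append_iff.1 ht with ⟨c, hc, -⟩ | ⟨c, rfl, hc⟩
  · exact h.1 p ⟨c, hc.symm⟩
  · exact h.2 c ⟨t, hc.symm⟩

attribute [simp] Step.val

@[simp] theorem hgt_nil : hgt [] = 0 := rfl

@[simp] theorem hgt_cons (s : Step) (w : List Step) : hgt (s :: w) = s.val + hgt w := by
  simp [hgt]

@[simp] theorem hgt_append (a b : List Step) : hgt (a ++ b) = hgt a + hgt b := by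
  simp [hgt]

theorem isMotzkin_H_cons {w : List Step} : IsMotzkin (.H :: w) ↔ IsMotzkin w := by
  simp [IsMotzkin, IsMotzkinPrefix, List.forall_prefix_cons]

theorem not_isMotzkinPrefix_D_cons (w : List Step) : ¬ IsMotzkinPrefix (.D :: w) := fun h => by
  simpa using h [.D] (by simp)

theorem IsMotzkin.head?_ne_D {w : List Step} (hw : IsMotzkin w) : w.head? ≠ some .D := by
  intro h
  obtain ⟨t, rfl⟩ := List.head?_eq_some_iff.1 h
  exact not_isMotzkinPrefix_D_cons t hw.1

theorem IsMotzkin.getLast?_ne_U {w : List Step} (hw : IsMotzkin w) : w.getLast? ≠ some .U := by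
  intro h
  obtain ⟨v, rfl⟩ := List.getLast?_eq_some_iff.1 h
  have := hw.1 v (List.prefix_append v _)
  have := hw.2
  simp at this
  omega

theorem IsMotzkin.not_isMotzkinPrefix_append_D_cons {u : List Step} (hu : IsMotzkin u)
    (t : List Step) : ¬ IsMotzkinPrefix (u ++ .D :: t) := by
  intro h
  have := h (u ++ [.D]) (by simp)
  simp [hu.2] at this

theorem isMotzkin_U_cons_append_D_cons {u : List Step} (hu : IsMotzkin u) {t : List Step} :
    IsMotzkin (.U :: (u ++ .D :: t)) ↔ IsMotzkin t := by
  have hu' : ∀ p, p <+: u → 0 ≤ 1 + hgt p := fun p hp => by have := hu.1 p hp; omega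
  simpa [IsMotzkin, IsMotzkinPrefix, List.forall_prefix_cons, List.forall_prefix_append, hu.2]
    using fun _ _ => hu'

theorem exists_isMotzkin_append_D_cons {w : List Step} (hw : ¬ IsMotzkinPrefix w) :
    ∃ u t, w = u ++ .D :: t ∧ IsMotzkin u := by
  induction w using List.reverseRecOn with
  | nil => exact absurd (fun p hp => by simp [List.prefix_nil.1 hp]) hw
  | append_singleton v s ih =>
    by_cases hv : IsMotzkinPrefix v
    · have hneg : hgt (v ++ [s]) < 0 := by
        by_contra! h
        exact hw fun p hp => (List.prefix_concat_iff.1 hp).elim (· ▸ h) (hv p)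
      have := hv v List.prefix_rfl
      obtain rfl : s = .D := by cases s <;> simp at hneg ⊢ <;> omega
      exact ⟨v, [], rfl, hv, by simp at hneg; omega⟩
    · obtain ⟨u, t, rfl, hu⟩ := ih hv
      exact ⟨u, t ++ [s], by simp, hu⟩

theorem exists_firstReturn {w : List Step} (hw : IsMotzkin (.U :: w)) :
    ∃ u t, w = u ++ .D :: t ∧ IsMotzkin u ∧ IsMotzkin t := by
  have hneg : ¬ IsMotzkinPrefix w := fun h => by
    have := h w List.prefix_rfl
    have := hw.2
    simp at this
    omega
  obtain ⟨u, t, rfl, hu⟩ := exists_isMotzkin_append_D_cons hneg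
  exact ⟨u, t, rfl, hu, (isMotzkin_U_cons_append_D_cons hu).1 hw⟩

theorem IsMotzkin.append_D_cons_inj {u u' t t' : List Step} (hu : IsMotzkin u)
    (hu' : IsMotzkin u') (h : u ++ .D :: t = u' ++ .D :: t') : u = u' ∧ t = t' := by
  rcases List.append_eq_append_iff.1 h with ⟨a, rfl, ha⟩ | ⟨a, rfl, ha⟩
  · cases a with
    | nil => simp_all
    | cons s a =>
      simp only [List.cons_append, List.cons.injEq] at ha
      exact absurd (ha.1 ▸ hu'.1) (hu.not_isMotzkinPrefix_append_D_cons a)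
  · cases a with
    | nil => simp_all
    | cons s a =>
      simp only [List.cons_append, List.cons.injEq] at ha
      exact absurd (ha.1 ▸ hu.1) (hu'.not_isMotzkinPrefix_append_D_cons a)

def NoCorner (a b : Step) : Prop := ¬ (a = .U ∧ b = .D) ∧ ¬ (a = .D ∧ b = .U)

theorem cornerless_iff_isChain {w : List Step} : Cornerless w ↔ w.IsChain NoCorner := by
  simp only [Cornerless, List.isChain_iff_forall_rel_of_append_cons_cons, NoCorner, List.IsInfix,
    not_exists]
  constructor
  · rintro ⟨hUD, hDU⟩ a b l₁ l₂ rfl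
    exact ⟨fun ⟨ha, hb⟩ => hUD l₁ l₂ (by simp [ha, hb]),
      fun ⟨ha, hb⟩ => hDU l₁ l₂ (by simp [ha, hb])⟩
  · intro h
    exact ⟨fun s t hst => (h (l₁ := s) (l₂ := t) (by simp [← hst])).1 ⟨rfl, rfl⟩,
      fun s t hst => (h (l₁ := s) (l₂ := t) (by simp [← hst])).2 ⟨rfl, rfl⟩⟩

theorem cornerless_H_cons {w : List Step} : Cornerless (.H :: w) ↔ Cornerless w := by
  cases w <;> simp [cornerless_iff_isChain, NoCorner]

theorem cornerless_U_cons_append_D_cons {u t : List Step} (hD : u.head? ≠ some .D)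
    (hU : u.getLast? ≠ some .U) :
    Cornerless (.U :: (u ++ .D :: t)) ↔
      u ≠ [] ∧ Cornerless u ∧ Cornerless t ∧ t.head? ≠ some .U := by
  rcases eq_or_ne u [] with rfl | hu
  · simp [cornerless_iff_isChain, NoCorner]
  rw [show Step.U :: (u ++ .D :: t) = [.U] ++ (u ++ ([.D] ++ t)) from rfl]
  simp only [cornerless_iff_isChain, List.isChain_append, List.isChain_singleton,
    List.head?_append_of_ne_nil _ hu]
  rcases hh : u.head? with _ | a <;> rcases hl : u.getLast? with _ | b <;>
    rcases t.head? with _ | c <;> simp_all [NoCorner]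

instance : Fintype Step := ⟨{.U, .H, .D}, fun s => by cases s <;> simp⟩

theorem hgt_eq_count_sub_count (w : List Step) : hgt w = w.count .U - w.count .D := by
  induction w with
  | nil => simp
  | cons s w ih => cases s <;> simp [ih] <;> omega

theorem length_eq_count_add_count_add_count (w : List Step) :
    w.length = w.count .U + w.count .H + w.count .D := by
  induction w with
  | nil => simp
  | cons s w ih => cases s <;> simp [ih] <;> omega

theorem IsMotzkin.length_eq {w : List Step} (hw : IsMotzkin w) :
    w.length = w.count .H + 2 * w.count .U := by
  have := hgt_eq_count_sub_count w
  have := length_eq_count_add_count_add_count w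
  rw [hw.2] at *
  omega

noncomputable def wordWeight (w : List Step) : Fin 2 →₀ ℕ :=
  Finsupp.single 0 (w.count .H) + Finsupp.single 1 (w.count .U)

theorem wordWeight_eq_iff {w : List Step} {d : Fin 2 →₀ ℕ} :
    wordWeight w = d ↔ w.count .H = d 0 ∧ w.count .U = d 1 := by
  simp [wordWeight, Finsupp.ext_iff, Fin.forall_fin_two, eq_comm]

@[simp] theorem wordWeight_nil : wordWeight [] = 0 := by
  simp [wordWeight]

theorem wordWeight_H_cons (w : List Step) :
    wordWeight (.H :: w) = Finsupp.single 0 1 + wordWeight w := by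
  simp [wordWeight, Finsupp.single_add]
  abel

theorem wordWeight_U_cons_append_D_cons (u t : List Step) :
    wordWeight (.U :: (u ++ .D :: t)) = Finsupp.single 1 1 + (wordWeight u + wordWeight t) := by
  simp [wordWeight, Finsupp.single_add]
  abel

abbrev CornerlessMotzkin : Type := {w : List Step // IsMotzkin w ∧ Cornerless w}

namespace CornerlessMotzkin

variable {R : Type*} [Semiring R]

def nil : CornerlessMotzkin :=
  ⟨[], by simp [IsMotzkin, IsMotzkinPrefix, Cornerless]⟩

noncomputable def weight (w : CornerlessMotzkin) : Fin 2 →₀ ℕ := wordWeight w.1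

theorem finite_fibre_weight (d : Fin 2 →₀ ℕ) : Finite {w : CornerlessMotzkin // w.weight = d} :=
  have := (List.finite_length_eq Step (d 0 + 2 * d 1)).to_subtype
  Finite.of_injective (fun w => (⟨w.1.1, by
      obtain ⟨h0, h1⟩ := wordWeight_eq_iff.1 w.2
      simp [w.1.2.1.length_eq, h0, h1]⟩ : {l : List Step | l.length = d 0 + 2 * d 1}))
    fun a b h => by
      simp only [Subtype.mk.injEq] at h
      exact Subtype.ext (Subtype.ext h)

theorem _root_.MG_eq_countingSeries : MG = countingSeries weight := by
  ext d
  rw [coeff_countingSeries, MvPowerSeries.coeff_apply]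
  exact congrArg _ (Nat.card_congr ((Equiv.subtypeEquivRight fun w => by
    rw [wordWeight_eq_iff, and_assoc]).trans
    (Equiv.subtypeSubtypeEquivSubtypeInter _ (fun w => wordWeight w = d)).symm))

theorem countingSeries_eq_one_add_ne_nil :
    countingSeries (R := R) weight =
      1 + countingSeries (fun w : {w : CornerlessMotzkin // w.1 ≠ []} => w.1.weight) := by
  let _ : Unique {w : CornerlessMotzkin // w.1 = []} :=
    ⟨⟨⟨nil, rfl⟩⟩, fun w => Subtype.ext (Subtype.ext w.2)⟩
  have h0 : (default : {w : CornerlessMotzkin // w.1 = []}).1.weight = 0 := by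
    rw [weight, (default : {w : CornerlessMotzkin // w.1 = []}).2, wordWeight_nil]
  rw [countingSeries_eq_subtype_add_compl finite_fibre_weight (fun w => w.1 = []),
    countingSeries_unique, h0, MvPowerSeries.monomial_zero_one]

noncomputable def firstReturnEquiv :
    {u : CornerlessMotzkin // u.1 ≠ []} × {t : CornerlessMotzkin // t.1.head? ≠ some .U} ≃
      {w : CornerlessMotzkin // w.1.head? = some .U} := by
  refine Equiv.ofBijective (fun p => ⟨⟨.U :: (p.1.1.1 ++ .D :: p.2.1.1), ?_⟩, rfl⟩) ⟨?_, ?_⟩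
  · obtain ⟨⟨⟨u, hu, hcu⟩, hne⟩, ⟨⟨t, ht, hct⟩, htU⟩⟩ := p
    exact ⟨(isMotzkin_U_cons_append_D_cons hu).2 ht,
      (cornerless_U_cons_append_D_cons hu.head?_ne_D hu.getLast?_ne_U).2 ⟨hne, hcu, hct, htU⟩⟩
  · rintro ⟨⟨⟨u, hu⟩, _⟩, ⟨⟨t, _⟩, _⟩⟩ ⟨⟨⟨u', hu'⟩, _⟩, ⟨⟨t', _⟩, _⟩⟩ h
    simp only [Subtype.ext_iff, List.cons.injEq, true_and] at h
    obtain ⟨rfl, rfl⟩ := hu.1.append_D_cons_inj hu'.1 h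
    rfl
  · rintro ⟨⟨w, hw, hcw⟩, hU⟩
    obtain ⟨w, rfl⟩ := List.head?_eq_some_iff.1 hU
    obtain ⟨u, t, rfl, hu, ht⟩ := exists_firstReturn hw
    obtain ⟨hne, hcu, hct, htU⟩ :=
      (cornerless_U_cons_append_D_cons hu.head?_ne_D hu.getLast?_ne_U).1 hcw
    exact ⟨(⟨⟨u, hu, hcu⟩, hne⟩, ⟨⟨t, ht, hct⟩, htU⟩), rfl⟩

noncomputable def nilOrHConsEquiv :
    Unit ⊕ CornerlessMotzkin ≃ {w : CornerlessMotzkin // w.1.head? ≠ some .U} := by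
  refine Equiv.ofBijective
    (Sum.elim (fun _ => ⟨nil, by simp [nil]⟩)
      (fun w => ⟨⟨.H :: w.1, isMotzkin_H_cons.2 w.2.1, cornerless_H_cons.2 w.2.2⟩, by simp⟩))
    ⟨?_, ?_⟩
  · rintro (_ | w) (_ | w') h <;> simp_all [Subtype.ext_iff, nil]
  · rintro ⟨⟨_ | ⟨s, w⟩, hw, hcw⟩, hU⟩
    · exact ⟨.inl (), rfl⟩
    · cases s with
      | U => simp at hU
      | H => exact ⟨.inr ⟨w, isMotzkin_H_cons.1 hw, cornerless_H_cons.1 hcw⟩, rfl⟩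
      | D => exact absurd hw.1 (not_isMotzkinPrefix_D_cons w)

theorem countingSeries_eq_X_one_mul_add :
    countingSeries (R := R) weight =
      MvPowerSeries.X 1 *
          (countingSeries (fun w : {w : CornerlessMotzkin // w.1 ≠ []} => w.1.weight) *
            countingSeries (fun w : {w : CornerlessMotzkin // w.1.head? ≠ some .U} => w.1.weight)) +
        countingSeries (fun w : {w : CornerlessMotzkin // w.1.head? ≠ some .U} => w.1.weight) := by
  rw [countingSeries_eq_subtype_add_compl finite_fibre_weight (fun w => w.1.head? = some .U),
    countingSeries_congr firstReturnEquiv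
      (f := fun p => Finsupp.single 1 1 + (p.1.1.weight + p.2.1.weight))
      (fun p => wordWeight_U_cons_append_D_cons _ _),
    countingSeries_const_add, countingSeries_prod (finite_fibre_subtype finite_fibre_weight _)
      (finite_fibre_subtype finite_fibre_weight _), MvPowerSeries.X_def]

theorem countingSeries_head?_ne_U :
    countingSeries (R := R) (fun w : {w : CornerlessMotzkin // w.1.head? ≠ some .U} => w.1.weight) =
      1 + MvPowerSeries.X 0 * countingSeries weight := by
  rw [countingSeries_congr nilOrHConsEquiv
      (f := Sum.elim (fun _ => 0) (fun w => Finsupp.single 0 1 + w.weight))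
      (by rintro (_ | w); exacts [wordWeight_nil, wordWeight_H_cons w.1]),
    countingSeries_sum_elim (fun _ => Finite.of_fintype _)
      (finite_fibre_const_add finite_fibre_weight _),
    countingSeries_unique, countingSeries_const_add, MvPowerSeries.X_def]
  simp [MvPowerSeries.monomial_zero_one]

end CornerlessMotzkin

/-- the generating function `M(x,y)` of cornerless Motzkin paths
satisfies `M = (1 + y(M − 1))(1 + xM)`. -/
theorem MG_equation :
    MG = (1 + MvPowerSeries.X (1 : Fin 2) * (MG - 1))
          * (1 + MvPowerSeries.X (0 : Fin 2) * MG) := by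
  have hN := CornerlessMotzkin.countingSeries_eq_one_add_ne_nil (R := ℚ)
  have hM := CornerlessMotzkin.countingSeries_eq_X_one_mul_add (R := ℚ)
  rw [CornerlessMotzkin.countingSeries_head?_ne_U, ← MG_eq_countingSeries] at hM
  rw [← MG_eq_countingSeries] at hN
  linear_combination hM - MvPowerSeries.X 1 * (1 + MvPowerSeries.X 0 * MG) * hN
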